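/- Let Ω ⊂ ℝ² be a bounded domain, u ∈ H¹₀(Ω) the weak solution of -Δu = f with f ∈ L²(Ω) (i.e., ∫ ∇u·∇v = ∫ f v for all v ∈ H¹₀(Ω)). For any v ∈ H¹₀(Ω) and any vector field p ∈ H(div;Ω) with div p + f = 0 in L²(Ω), the hypercircle identity holds: ‖∇u - ∇v‖²_{L²(Ω)} + ‖∇u - p‖²_{L²(Ω)} = ‖∇v - p‖²_{L²(Ω)}. -/

import Mathlib

open MeasureTheory RealInnerProductSpace

local notation "E2" => EuclideanSpace ℝ (Fin 2)

/-! The error `∇u - ∇v` and the flux error `∇u - p` are orthogonal in `L²(Ω)`: testing the weak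
equation and Green's formula with `w = u - v` gives `∫ ∇w · ∇u = ∫ f w = ∫ ∇w · p`, because
`div p = -f`. The hypercircle identity is then Pythagoras' theorem in `L²(Ω; ℝ²)` for
`∇v - p = (∇u - p) - (∇u - ∇v)`. -/

namespace MeasureTheory.MemLp

variable {α E : Type*} {m : MeasurableSpace α} {μ : Measure α}
  [NormedAddCommGroup E] [InnerProductSpace ℝ E] {F G : α → E}

theorem integral_inner_eq_inner_toLp (hF : MemLp F 2 μ) (hG : MemLp G 2 μ) :
    ∫ x, ⟪F x, G x⟫ ∂μ = ⟪hF.toLp F, hG.toLp G⟫ := by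
  rw [L2.inner_def]
  refine integral_congr_ae ?_
  filter_upwards [hF.coeFn_toLp, hG.coeFn_toLp] with x hFx hGx
  rw [hFx, hGx]

theorem integrable_inner (hF : MemLp F 2 μ) (hG : MemLp G 2 μ) :
    Integrable (fun x => ⟪F x, G x⟫) μ := by
  refine (L2.integrable_inner (hF.toLp F) (hG.toLp G)).congr ?_
  filter_upwards [hF.coeFn_toLp, hG.coeFn_toLp] with x hFx hGx
  rw [hFx, hGx]

theorem integral_norm_sq_eq_norm_toLp_sq (hF : MemLp F 2 μ) :
    ∫ x, ‖F x‖ ^ 2 ∂μ = ‖hF.toLp F‖ ^ 2 := by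
  rw [← real_inner_self_eq_norm_sq, ← hF.integral_inner_eq_inner_toLp hF]
  simp_rw [real_inner_self_eq_norm_sq]

theorem integral_norm_sub_sq_eq_add_of_integral_inner_eq_zero (hF : MemLp F 2 μ)
    (hG : MemLp G 2 μ) (horth : ∫ x, ⟪F x, G x⟫ ∂μ = 0) :
    ∫ x, ‖F x - G x‖ ^ 2 ∂μ = ∫ x, ‖F x‖ ^ 2 ∂μ + ∫ x, ‖G x‖ ^ 2 ∂μ := by
  rw [hF.integral_inner_eq_inner_toLp hG] at horth
  change ∫ x, ‖(F - G) x‖ ^ 2 ∂μ = _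
  rw [(hF.sub hG).integral_norm_sq_eq_norm_toLp_sq, hF.integral_norm_sq_eq_norm_toLp_sq,
    hG.integral_norm_sq_eq_norm_toLp_sq, MemLp.toLp_sub hF hG, norm_sub_sq_real, horth]
  ring

end MeasureTheory.MemLp

theorem integral_inner_grad_sub_flux_eq_zero {α E : Type*} {m : MeasurableSpace α}
    {μ : Measure α} [NormedAddCommGroup E] [InnerProductSpace ℝ E]
    {grad : (α → ℝ) → α → E} {u w : α → ℝ} {p : α → E} {f divp : α → ℝ}
    (hweak : ∫ x, ⟪grad u x, grad w x⟫ ∂μ = ∫ x, f x * w x ∂μ)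
    (hGreen : ∫ x, ⟪grad w x, p x⟫ ∂μ = -∫ x, w x * divp x ∂μ)
    (hdivf : ∀ᵐ x ∂μ, divp x + f x = 0)
    (hgw : MemLp (grad w) 2 μ) (hgu : MemLp (grad u) 2 μ) (hp : MemLp p 2 μ) :
    ∫ x, ⟪grad w x, grad u x - p x⟫ ∂μ = 0 := by
  have hflux : ∫ x, ⟪grad w x, p x⟫ ∂μ = ∫ x, f x * w x ∂μ := by
    rw [hGreen, ← integral_neg]
    refine integral_congr_ae ?_
    filter_upwards [hdivf] with x hx
    rw [eq_neg_of_add_eq_zero_left hx]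
    ring
  simp_rw [inner_sub_right]
  rw [integral_sub (hgw.integrable_inner hgu) (hgw.integrable_inner hp), hflux, ← hweak]
  simp_rw [real_inner_comm (grad w _), sub_self]

theorem prager_synge_hypercircle_general
    (Ω : Set E2)
    (H10 : (E2 → ℝ) → Prop)                      -- membership in H¹₀(Ω)
    (grad : (E2 → ℝ) → E2 → E2)                  -- weak gradient operator
    (u v : E2 → ℝ) (p : E2 → E2) (f divp : E2 → ℝ)
    (hsub : H10 (fun x => u x - v x))
    (hgradsub : ∀ x, grad (fun y => u y - v y) x = grad u x - grad v x)
    -- u is the weak solution: (∇u, ∇w) = (f, w) for all w ∈ H¹₀(Ω)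
    (hweak : ∀ w, H10 w →
      ∫ x in Ω, ⟪grad u x, grad w x⟫ = ∫ x in Ω, f x * w x)
    -- p ∈ H(div;Ω) with distributional divergence divp; Green's formula
    (hGreen : ∀ w, H10 w →
      ∫ x in Ω, ⟪grad w x, p x⟫ = -∫ x in Ω, w x * divp x)
    -- div p + f = 0 in L²(Ω)
    (hdivf : ∀ᵐ x ∂(volume.restrict Ω), divp x + f x = 0)
    (hgu : MemLp (grad u) 2 (volume.restrict Ω))
    (hgv : MemLp (grad v) 2 (volume.restrict Ω))
    (hp : MemLp p 2 (volume.restrict Ω)) :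
    (∫ x in Ω, ‖grad u x - grad v x‖ ^ 2) + (∫ x in Ω, ‖grad u x - p x‖ ^ 2)
      = ∫ x in Ω, ‖grad v x - p x‖ ^ 2 := by
  have hgrad : grad (fun y => u y - v y) = fun x => grad u x - grad v x := funext hgradsub
  have hgw : MemLp (fun x => grad u x - grad v x) 2 (volume.restrict Ω) := hgu.sub hgv
  have hgp : MemLp (fun x => grad u x - p x) 2 (volume.restrict Ω) := hgu.sub hp
  have horth : ∫ x in Ω, ⟪grad u x - grad v x, grad u x - p x⟫ = 0 := by
    simpa only [hgrad] using
      integral_inner_grad_sub_flux_eq_zero (hweak _ hsub) (hGreen _ hsub) hdivf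
        (hgrad ▸ hgw) hgu hp
  rw [← MemLp.integral_norm_sub_sq_eq_add_of_integral_inner_eq_zero hgw hgp horth]
  simp_rw [sub_sub_sub_cancel_left, norm_sub_rev (p _)]

/-- Prager–Synge hypercircle identity: if u ∈ H¹₀(Ω) weakly solves -Δu = f and
p ∈ H(div;Ω) satisfies div p + f = 0 in L²(Ω), then for any v ∈ H¹₀(Ω),
‖∇u - ∇v‖² + ‖∇u - p‖² = ‖∇v - p‖². -/
theorem prager_synge_hypercircle
    (Ω : Set E2) (hΩmeas : MeasurableSet Ω) (hΩbdd : Bornology.IsBounded Ω)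
    (H10 : (E2 → ℝ) → Prop)                      -- membership in H¹₀(Ω)
    (grad : (E2 → ℝ) → E2 → E2)                  -- weak gradient operator
    (u v : E2 → ℝ) (p : E2 → E2) (f divp : E2 → ℝ)
    (hf : MemLp f 2 (volume.restrict Ω))         -- f ∈ L²(Ω)
    (hu : H10 u) (hv : H10 v)
    (hsub : H10 (fun x => u x - v x))
    (hgradsub : ∀ x, grad (fun y => u y - v y) x = grad u x - grad v x)
    -- u is the weak solution: (∇u, ∇w) = (f, w) for all w ∈ H¹₀(Ω)
    (hweak : ∀ w, H10 w →
      ∫ x in Ω, ⟪grad u x, grad w x⟫ = ∫ x in Ω, f x * w x)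
    -- p ∈ H(div;Ω) with distributional divergence divp; Green's formula
    (hGreen : ∀ w, H10 w →
      ∫ x in Ω, ⟪grad w x, p x⟫ = -∫ x in Ω, w x * divp x)
    (hdivL2 : MemLp divp 2 (volume.restrict Ω))
    -- div p + f = 0 in L²(Ω)
    (hdivf : ∀ᵐ x ∂(volume.restrict Ω), divp x + f x = 0)
    (hgu : MemLp (grad u) 2 (volume.restrict Ω))
    (hgv : MemLp (grad v) 2 (volume.restrict Ω))
    (hp : MemLp p 2 (volume.restrict Ω)) :
    (∫ x in Ω, ‖grad u x - grad v x‖ ^ 2) + (∫ x in Ω, ‖grad u x - p x‖ ^ 2)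
      = ∫ x in Ω, ‖grad v x - p x‖ ^ 2 :=
  prager_synge_hypercircle_general Ω H10 grad u v p f divp hsub hgradsub hweak hGreen hdivf hgu hgv
    hp
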